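/- Let G be a non-Archimedean abelian Polish group, Ĥ an abelian Polish group, and M a non-Archimedean Polishable subgroup of Ĥ. Let F : G → Ĥ be a Borel map with F(x+y) − F(x) − F(y) ∈ M for all x, y ∈ G (a Borel lift of a homomorphism φ : G → Ĥ/M). Let (Ĥ_k)_{k∈ω} be a decreasing neighborhood basis of 0 in Ĥ with Ĥ₀ = Ĥ, and let (M_k)_{k∈ω} be a decreasing neighborhood basis of 0 in the Polish group topology of M consisting of subgroups, with M₀ = M and M_k = cl_Ĥ(M_k) ∩ M ⊆ Ĥ_k for every k. Then there exist a decreasing neighborhood basis (G_k)_{k∈ω} of 0 in G consisting of subgroups with G₀ = G, and a continuous function g : G → Ĥ with g(x) − F(x) ∈ M for all x ∈ G, such that for every k ∈ ω and all x, y ∈ G_k one has g(x+y) − g(x) − g(y) ∈ M_k and g(x) ∈ Ĥ_k. -/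

import Mathlib

/-!
Starting from `F - F 0`, one constructs by recursion Baire measurable maps `f k` and open subgroups
`V k` shrinking to `0`, such that `f (k + 1) - f k` takes values in `Mk k` and, along `V k`, the
additivity defect of `f k` lies in `Mk k` while its values lie in `Mk k + Hk k`.

In one step, the defect of `f` is Baire measurable and takes countably many values modulo
`Mk (k + 1)`, so by the Baire category theorem it is comeagrely constant on some box
`(a + W) × (b + W)`. By Kuratowski–Ulam and the cocycle identity, for each `x ∈ W` the map
`addDefect f x ·` is then comeagrely constant on `b + W`; adding a Baire measurable choice of these
constants to `f` makes it additive modulo `Mk (k + 1)` on `W`. The new map is continuous on a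
comeagre set, which bounds its values on a smaller open subgroup `S`, and coset representatives of
`S` extend it from `S` to all of `G`.

Since the `Mk k` form a basis of open subgroups of the Polish group `M`, which is complete with
respect to it, the `f k` converge to a map `g`. Along a reindexed subsequence `V (j k)` with
`Hk (j k) + Hk (j k) ⊆ Hk k` this `g` has the required defects and values, and is continuous.
-/

open Topology Filter Set TopologicalSpace

section BaireCategory

variable {X Y : Type*} [TopologicalSpace X] [TopologicalSpace Y]

theorem residual_inf_principal_neBot [BaireSpace X] {O : Set X} (hO : IsOpen O)
    (hne : O.Nonempty) : (residual X ⊓ 𝓟 O).NeBot :=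
  inf_principal_neBot_iff.2 fun _ hU => by
    simpa only [inter_comm] using (dense_of_mem_residual hU).inter_open_nonempty O hO hne

theorem Homeomorph.eventually_residual_inf_principal (e : X ≃ₜ Y) {O : Set Y} {p : Y → Prop}
    (h : ∀ᶠ y in residual Y ⊓ 𝓟 O, p y) : ∀ᶠ x in residual X ⊓ 𝓟 (e ⁻¹' O), p (e x) :=
  ((tendsto_map.mono_right e.residual_map_eq.le).inf
    (tendsto_principal_principal.2 fun _ hx => hx)).eventually h

theorem eventually_residual_inf_principal_iff_subset_closure [BaireSpace Y] {u O : Set Y}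
    (hu : IsOpen u) (hO : IsOpen O) : (∀ᶠ y in residual Y ⊓ 𝓟 O, y ∈ u) ↔ O ⊆ closure u := by
  constructor
  · intro h y hyO
    by_contra hy
    have hO' : IsOpen (O \ closure u) := hO.sdiff isClosed_closure
    have := residual_inf_principal_neBot hO' ⟨y, hyO, hy⟩
    have hmono : residual Y ⊓ 𝓟 (O \ closure u) ≤ residual Y ⊓ 𝓟 O :=
      inf_le_inf_left _ (principal_mono.2 sdiff_subset)
    obtain ⟨z, hzu, hz⟩ := ((h.filter_mono hmono).and
      (eventually_inf_principal.2 (Eventually.of_forall fun _ hz => hz))).exists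
    exact hz.2 (subset_closure hzu)
  · intro h
    have hfr : IsNowhereDense (frontier u) := by
      rw [isClosed_frontier.isNowhereDense_iff, ← frontier_compl]
      exact interior_frontier hu.isClosed_compl
    have hmeagre : IsMeagre (O \ u) := hfr.isMeagre.mono fun y hy => by
      rw [hu.frontier_eq]; exact ⟨h hy.1, hy.2⟩
    refine mem_inf_principal.2 (mem_of_superset hmeagre fun y hy hyO => ?_)
    by_contra hyu
    exact hy ⟨hyO, hyu⟩

theorem isOpen_setOf_exists_mem_section {u : Set (X × Y)} (hu : IsOpen u) (t : Set Y) :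
    IsOpen {x | ∃ y ∈ t, (x, y) ∈ u} := by
  have : {x | ∃ y ∈ t, (x, y) ∈ u} = ⋃ y ∈ t, (fun x => (x, y)) ⁻¹' u := by ext; simp
  rw [this]
  exact isOpen_biUnion fun y _ => hu.preimage (Continuous.prodMk_left y)

theorem setOf_subset_closure_section_eq {α : Type*} {B : Set (Set Y)} (hB : IsTopologicalBasis B)
    (u : Set (α × Y)) (O : Set Y) :
    {x | O ⊆ closure {y | (x, y) ∈ u}} =
      ⋂ b ∈ {b ∈ B | (b ∩ O).Nonempty}, {x | ∃ y ∈ b, (x, y) ∈ u} := by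
  ext x
  simp only [mem_ofPred_eq, mem_iInter, and_imp]
  constructor
  · rintro hO b hb ⟨z, hzb, hzO⟩
    obtain ⟨y, hyb, hyu⟩ := mem_closure_iff.1 (hO hzO) b (hB.isOpen hb) hzb
    exact ⟨y, hyb, hyu⟩
  · intro h z hzO
    exact hB.mem_closure_iff.2 fun b hb hzb => h b hb ⟨z, hzb, hzO⟩

variable [SecondCountableTopology Y]

theorem BaireMeasurableSet.setOf_subset_closure_section {u : Set (X × Y)} (hu : IsOpen u)
    (O : Set Y) : BaireMeasurableSet {x | O ⊆ closure {y | (x, y) ∈ u}} := by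
  rw [setOf_subset_closure_section_eq (isBasis_countableBasis Y)]
  exact .biInter ((countable_countableBasis Y).mono (sep_subset _ _)) fun b _ =>
    (isOpen_setOf_exists_mem_section hu b).baireMeasurableSet

theorem setOf_dense_section_mem_residual {u : Set (X × Y)} (hu : IsOpen u) (hd : Dense u) :
    {x | Dense {y | (x, y) ∈ u}} ∈ residual X := by
  simp_rw [dense_iff_closure_eq, ← univ_subset_iff]
  rw [setOf_subset_closure_section_eq (isBasis_countableBasis Y)]
  refine (countable_bInter_mem ((countable_countableBasis Y).mono (sep_subset _ _))).2 ?_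
  rintro b ⟨hb, hbne⟩
  refine residual_of_dense_open (isOpen_setOf_exists_mem_section hu b) ?_
  refine dense_iff_inter_open.2 fun W hW hWne => ?_
  have hb' : IsOpen b := (isBasis_countableBasis Y).isOpen hb
  obtain ⟨⟨x, y⟩, hxy, hxyu⟩ := hd.inter_open_nonempty (W ×ˢ b) (hW.prod hb')
    (hWne.prod (by simpa using hbne))
  exact ⟨x, hxy.1, y, hxy.2, hxyu⟩

/-- The Kuratowski–Ulam theorem, in the direction "comeagre sets have comeagre sections". -/
theorem curry_residual_le_residual_prod : (residual X).curry (residual Y) ≤ residual (X × Y) := by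
  intro s hs
  obtain ⟨S, hSnwd, hSc, hsS⟩ :=
    isMeagre_iff_countable_union_isNowhereDense.1 (show IsMeagre sᶜ by simpa [IsMeagre] using hs)
  have hdense : ∀ t ∈ S, ∀ᶠ x in residual X, Dense {y | (x, y) ∈ (closure t)ᶜ} := fun t ht => by
    refine setOf_dense_section_mem_residual isClosed_closure.isOpen_compl ?_
    rw [← interior_eq_empty_iff_dense_compl, ← isClosed_closure.isNowhereDense_iff]
    exact (hSnwd t ht).closure
  refine eventually_curry_iff.2 ?_
  filter_upwards [(countable_bInter_mem hSc).2 hdense] with x hx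
  simp only [mem_iInter, mem_ofPred_eq] at hx
  filter_upwards [(countable_bInter_mem hSc).2 fun t ht =>
    residual_of_dense_open (isClosed_closure.isOpen_compl.preimage (Continuous.prodMk_right x))
      (hx t ht)] with y hy
  by_contra hys
  obtain ⟨t, ht, hyt⟩ := mem_sUnion.1 (hsS hys)
  exact mem_iInter₂.1 hy t ht (subset_closure hyt)

theorem Filter.Eventually.exists_mem_eventually_residual_inf_principal_prod [BaireSpace X]
    {A : Set X} {B : Set Y} (hA : IsOpen A) (hAne : A.Nonempty) {q : X × Y → Prop}
    (h : ∀ᶠ p in residual (X × Y) ⊓ 𝓟 (A ×ˢ B), q p) :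
    ∃ x ∈ A, ∀ᶠ y in residual Y ⊓ 𝓟 B, q (x, y) := by
  have hcurry : ∀ᶠ x in residual X, ∀ᶠ y in residual Y, (x, y) ∈ A ×ˢ B → q (x, y) :=
    eventually_curry_iff.1 ((eventually_inf_principal.1 h).filter_mono
      curry_residual_le_residual_prod)
  have := residual_inf_principal_neBot hA hAne
  obtain ⟨x, hx, hxA⟩ := ((hcurry.filter_mono inf_le_left).and
    (mem_inf_of_right (mem_principal_self A))).exists
  exact ⟨x, hxA, eventually_inf_principal.2 (hx.mono fun y hy hyB => hy ⟨hxA, hyB⟩)⟩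

theorem BaireMeasurableSet.setOf_eventually_residual_inf_principal [BaireSpace Y]
    {s : Set (X × Y)} (hs : BaireMeasurableSet s) {O : Set Y} (hO : IsOpen O) :
    BaireMeasurableSet {x | ∀ᶠ y in residual Y ⊓ 𝓟 O, (x, y) ∈ s} := by
  obtain ⟨u, hu, hsu⟩ := hs.residualEq_isOpen
  have hsections : ∀ᶠ x in residual X, ∀ᶠ y in residual Y, ((x, y) ∈ s ↔ (x, y) ∈ u) :=
    eventually_curry_iff.1 ((eventuallyEq_set.1 hsu).filter_mono curry_residual_le_residual_prod)
  refine (BaireMeasurableSet.setOf_subset_closure_section hu O).congr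
    (eventuallyEq_set.2 ?_)
  filter_upwards [hsections] with x hx
  refine (eventually_residual_inf_principal_iff_subset_closure (u := {y | (x, y) ∈ u})
    (hu.preimage (Continuous.prodMk_right x)) hO).symm.trans ?_
  exact eventually_congr ((hx.filter_mono inf_le_left).mono fun y hy => hy.symm)

theorem exists_isOpen_eventually_residual_inf_principal_mem [BaireSpace X] {ι : Type*}
    [Countable ι] {A : ι → Set X} (hA : ∀ i, BaireMeasurableSet (A i)) {U : Set X}
    (hU : IsOpen U) (hne : U.Nonempty) (hcover : U ⊆ ⋃ i, A i) :
    ∃ i, ∃ O ⊆ U, IsOpen O ∧ O.Nonempty ∧ ∀ᶠ x in residual X ⊓ 𝓟 O, x ∈ A i := by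
  obtain ⟨i, hi⟩ : ∃ i, ¬ IsMeagre (A i ∩ U) := by
    by_contra! h
    refine not_isMeagre_of_isOpen hU hne ((isMeagre_iUnion h).mono fun x hx => ?_)
    obtain ⟨i, hxi⟩ := mem_iUnion.1 (hcover hx)
    exact mem_iUnion.2 ⟨i, hxi, hx⟩
  obtain ⟨u, hu, hAu⟩ := ((hA i).inter hU.baireMeasurableSet).residualEq_isOpen
  have hAu' : ∀ᶠ x in residual X, x ∈ u ∩ U → x ∈ A i :=
    (eventuallyEq_set.1 hAu).mono fun x hx hxu => (hx.2 hxu.1).1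
  refine ⟨i, u ∩ U, inter_subset_right, hu.inter hU, ?_, eventually_inf_principal.2 hAu'⟩
  by_contra hempty
  refine hi (mem_of_superset (eventuallyEq_set.1 hAu) fun x hx hxA => ?_)
  exact hempty ⟨x, hx.1 hxA, hxA.2⟩

end BaireCategory

theorem Filter.Eventually.residual_inf_principal_coset_add {X : Type*} [TopologicalSpace X]
    [AddCommGroup X] [IsTopologicalAddGroup X] {S : AddSubgroup X} {a t : X} (ht : t ∈ S)
    {q : X → Prop} (h : ∀ᶠ p in residual X ⊓ 𝓟 {p | p - a ∈ S}, q p) :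
    ∀ᶠ p in residual X ⊓ 𝓟 {p | p - a ∈ S}, q (p + t) := by
  have hpre : (Homeomorph.addRight t) ⁻¹' {p | p - a ∈ S} = {p | p - a ∈ S} := by
    ext p
    simp [add_sub_right_comm, S.add_mem_cancel_right ht]
  have := (Homeomorph.addRight t).eventually_residual_inf_principal h
  rwa [hpre] at this

abbrev BaireMeasurable {X Y : Type*} [TopologicalSpace X] [MeasurableSpace Y] (f : X → Y) :
    Prop :=
  EventuallyMeasurable (borel X) (residual X) f

section BaireMeasurable

variable {X Y Z : Type*} [TopologicalSpace X] [TopologicalSpace Y] [MeasurableSpace Z]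

theorem BaireMeasurable.baireMeasurableSet_preimage {f : X → Z} (hf : BaireMeasurable f)
    {s : Set Z} (hs : MeasurableSet s) : BaireMeasurableSet (f ⁻¹' s) :=
  hf hs

theorem Measurable.baireMeasurable [MeasurableSpace X] [BorelSpace X] {f : X → Z}
    (hf : Measurable f) : BaireMeasurable f :=
  fun _ hs => (hf hs).baireMeasurableSet

theorem BaireMeasurable.comp_isOpenMap {f : Y → Z} (hf : BaireMeasurable f) {φ : X → Y}
    (hc : Continuous φ) (ho : IsOpenMap φ) : BaireMeasurable (f ∘ φ) :=
  fun _ hs => (hf.baireMeasurableSet_preimage hs).preimage hc ho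

theorem IsLocallyConstant.baireMeasurable_comp {α : Type*} {r : X → α} (hr : IsLocallyConstant r)
    (f : α → Z) : BaireMeasurable (f ∘ r) :=
  fun s _ => (hr (f ⁻¹' s)).baireMeasurableSet

theorem BaireMeasurable.exists_mem_residual_continuousOn [SecondCountableTopology Y]
    [MeasurableSpace Y] [OpensMeasurableSpace Y] {f : X → Y} (hf : BaireMeasurable f) :
    ∃ D ∈ residual X, ContinuousOn f D := by
  have hB := isBasis_countableBasis Y
  have : Countable (countableBasis Y) := (countable_countableBasis Y).to_subtype
  choose u hu hfu using fun b : countableBasis Y =>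
    (hf.baireMeasurableSet_preimage (hB.isOpen b.2).measurableSet).residualEq_isOpen
  refine ⟨⋂ b : countableBasis Y, {x | x ∈ f ⁻¹' b ↔ x ∈ u b}, countable_iInter_mem.2 fun b =>
    eventuallyEq_set.1 (hfu b), fun x hx => ?_⟩
  refine hB.nhds_hasBasis.tendsto_right_iff.2 ?_
  rintro b ⟨hb, hfx⟩
  exact mem_nhdsWithin.2 ⟨u ⟨b, hb⟩, hu _, (mem_iInter.1 hx ⟨b, hb⟩).1 hfx,
    fun y hy => (mem_iInter.1 hy.2 ⟨b, hb⟩).2 hy.1⟩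

end BaireMeasurable

theorem range_mem_residual_of_isInducing {K X : Type*} [TopologicalSpace K] [PolishSpace K]
    [TopologicalSpace X] [MetrizableSpace X] {f : K → X} (hf : IsInducing f)
    (hd : DenseRange f) : range f ∈ residual X := by
  let := upgradeIsCompletelyMetrizable K
  let := metrizableSpaceMetric X
  set W : ℕ → Set X := fun m =>
    ⋃₀ {V : Set X | IsOpen V ∧ ∀ a b : K, f a ∈ V → f b ∈ V → dist a b ≤ 1 / (m + 1)}
  have hrange : ∀ m, range f ⊆ W m := by
    rintro m - ⟨a, rfl⟩
    have hball : Metric.ball a (1 / (2 * (m + 1))) ∈ 𝓝 a := Metric.ball_mem_nhds _ (by positivity)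
    obtain ⟨t, ht, htsub⟩ := (hf.nhds_eq_comap a ▸ hball : _ ∈ comap f (𝓝 (f a)))
    obtain ⟨V, hVt, hV, hfaV⟩ := mem_nhds_iff.1 ht
    refine mem_sUnion.2 ⟨V, ⟨hV, fun a' b' ha' hb' => ?_⟩, hfaV⟩
    have h1 := Metric.mem_ball.1 (htsub (hVt ha'))
    have h2 := Metric.mem_ball'.1 (htsub (hVt hb'))
    calc dist a' b' ≤ dist a' a + dist a b' := dist_triangle _ _ _
      _ ≤ 1 / (2 * (m + 1)) + 1 / (2 * (m + 1)) := by linarith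
      _ = 1 / (m + 1) := by field_simp; ring
  have hsub : (⋂ m, W m) ⊆ range f := by
    intro z hz
    choose V hV hzV using fun m => mem_sUnion.1 (mem_iInter.1 hz m)
    have hex : ∀ m : ℕ, ∃ a : K, f a ∈ (⋂ i ∈ Iic m, V i) ∩ Metric.ball z (1 / (m + 1)) :=
      fun m => hd.exists_mem_open (((finite_Iic m).isOpen_biInter fun i _ => (hV i).1).inter
        Metric.isOpen_ball) ⟨z, mem_biInter fun i _ => hzV i, Metric.mem_ball_self (by positivity)⟩
    choose a ha using hex
    have hcauchy : CauchySeq a := by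
      refine cauchySeq_of_le_tendsto_0 (fun n : ℕ => 1 / ((n : ℝ) + 1)) (fun n m N hn hm => ?_)
        tendsto_one_div_add_atTop_nhds_zero_nat
      exact (hV N).2 _ _ (mem_iInter₂.1 (ha n).1 N hn) (mem_iInter₂.1 (ha m).1 N hm)
    obtain ⟨x, hx⟩ := cauchySeq_tendsto_of_complete hcauchy
    have hz : Tendsto (fun m => f (a m)) atTop (𝓝 z) := by
      refine tendsto_iff_dist_tendsto_zero.2 (squeeze_zero (fun m => dist_nonneg)
        (fun m => (Metric.mem_ball.1 (ha m).2).le) tendsto_one_div_add_atTop_nhds_zero_nat)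
    exact ⟨x, tendsto_nhds_unique ((hf.continuous.tendsto x).comp hx) hz⟩
  have hW : ∀ m, IsOpen (W m) := fun m => isOpen_sUnion fun V hV => hV.1
  rw [(subset_iInter hrange).antisymm hsub]
  exact countable_iInter_mem.2 fun m => residual_of_dense_open (hW m) (hd.mono (hrange m))

theorem AddSubgroup.eq_top_of_mem_residual {L : Type*} [TopologicalSpace L] [AddGroup L]
    [IsTopologicalAddGroup L] [BaireSpace L] (S : AddSubgroup L)
    (hS : (S : Set L) ∈ residual L) : S = ⊤ := by
  refine eq_top_iff.2 fun p _ => ?_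
  have hS' : (fun z => p + z) ⁻¹' S ∈ residual L := by
    rw [← (Homeomorph.addLeft p).residual_map_eq] at hS
    exact hS
  obtain ⟨z, hz, hpz⟩ := (dense_of_mem_residual (inter_mem hS hS')).nonempty
  simpa using S.sub_mem hpz hz

theorem isInducing_pi_quotientMk {K ι : Type*} [TopologicalSpace K] [AddCommGroup K]
    [IsTopologicalAddGroup K] (N : ι → AddSubgroup K) (hN : ∀ i, IsOpen (N i : Set K))
    (hbasis : ∀ U ∈ 𝓝 (0 : K), ∃ i, (N i : Set K) ⊆ U) :
    IsInducing (AddMonoidHom.pi fun i => QuotientAddGroup.mk' (N i)) := by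
  have : ∀ i, DiscreteTopology (K ⧸ N i) := fun i => QuotientAddGroup.discreteTopology (hN i)
  set φ : K →+ ((i : ι) → K ⧸ N i) := AddMonoidHom.pi fun i => QuotientAddGroup.mk' (N i)
  have hc : Continuous φ := continuous_pi fun i => QuotientAddGroup.continuous_mk
  refine IsTopologicalAddGroup.isInducing_iff_nhds_zero.2 (le_antisymm
    (map_zero φ ▸ hc.tendsto 0).le_comap fun U hU => ?_)
  obtain ⟨i, hi⟩ := hbasis U hU
  refine mem_comap.2 ⟨{q : (i : ι) → K ⧸ N i | q i = 0}, ((isOpen_discrete {0}).preimage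
    (continuous_apply i)).mem_nhds rfl, fun x hx => hi ?_⟩
  exact (QuotientAddGroup.eq_zero_iff x).1 hx

/-- Completeness of a Polish group with respect to a basis of open subgroups at `0`. -/
theorem exists_forall_sub_mem_of_forall_sub_mem {K : Type*} [TopologicalSpace K] [AddCommGroup K]
    [IsTopologicalAddGroup K] [PolishSpace K] (N : ℕ → AddSubgroup K)
    (hN : ∀ n, IsOpen (N n : Set K)) (hbasis : ∀ U ∈ 𝓝 (0 : K), ∃ n, (N n : Set K) ⊆ U)
    (s : ℕ → K) (hs : ∀ m n, m ≤ n → s n - s m ∈ N m) : ∃ x, ∀ n, x - s n ∈ N n := by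
  have : ∀ n, DiscreteTopology (K ⧸ N n) := fun n => QuotientAddGroup.discreteTopology (hN n)
  have : ∀ n, Countable (K ⧸ N n) := fun n => separableSpace_iff_countable.1 inferInstance
  set φ : K →+ ((n : ℕ) → K ⧸ N n) := AddMonoidHom.pi fun n => QuotientAddGroup.mk' (N n)
  have hφ : IsInducing φ := isInducing_pi_quotientMk N hN hbasis
  set L := φ.range.topologicalClosure
  have : PolishSpace L := (AddSubgroup.isClosed_topologicalClosure _).polishSpace
  let ψ : K →+ L := φ.codRestrict L fun x => φ.range.le_topologicalClosure ⟨x, rfl⟩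
  have hψ : IsInducing ψ := .of_comp (hφ.continuous.subtype_mk _) continuous_subtype_val hφ
  have hψd : DenseRange ψ := fun z => by
    rw [closure_subtype, ← range_comp]
    exact z.2
  -- the image of `K` is a comeagre subgroup of `L`, hence all of `L`
  have htop := AddSubgroup.eq_top_of_mem_residual ψ.range (by
    simpa using range_mem_residual_of_isInducing hψ hψd)
  let p : (n : ℕ) → K ⧸ N n := fun n => s n
  have hp : p ∈ L := by
    refine mem_closure_of_tendsto (f := fun m => φ (s m)) (b := atTop)
      (tendsto_pi_nhds.2 fun n => ?_) (Eventually.of_forall fun m => ⟨s m, rfl⟩)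
    refine tendsto_const_nhds.congr' ?_
    filter_upwards [eventually_ge_atTop n] with m hm
    exact (QuotientAddGroup.eq_iff_sub_mem.2 (hs n m hm)).symm
  obtain ⟨x, hx⟩ := htop ▸ (AddSubgroup.mem_top (⟨p, hp⟩ : L))
  exact ⟨x, fun n => QuotientAddGroup.eq_iff_sub_mem.1 (congrFun (congrArg Subtype.val hx) n)⟩

section AddDefect

variable {G H : Type*} [AddCommGroup G] [AddCommGroup H]

def addDefect (f : G → H) (x y : G) : H := f (x + y) - f x - f y

theorem addDefect_comm (f : G → H) (x y : G) : addDefect f x y = addDefect f y x := by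
  simp only [addDefect, add_comm x y, sub_right_comm]

theorem addDefect_add_addDefect (f : G → H) (x y z : G) :
    addDefect f x y + addDefect f (x + y) z = addDefect f x (y + z) + addDefect f y z := by
  simp only [addDefect, add_assoc]
  abel

theorem addDefect_zero_left (f : G → H) (y : G) : addDefect f 0 y = -f 0 := by
  simp [addDefect]

theorem addDefect_sub_addDefect_mem {N : AddSubgroup H} {f g : G → H}
    (h : ∀ x, g x - f x ∈ N) (x y : G) : addDefect g x y - addDefect f x y ∈ N := by
  have : addDefect g x y - addDefect f x y =
      (g (x + y) - f (x + y)) - (g x - f x) - (g y - f y) := by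
    simp only [addDefect]; abel
  rw [this]
  exact N.sub_mem (N.sub_mem (h _) (h _)) (h _)

end AddDefect

section CosetRep

variable {G : Type*} [AddCommGroup G]

open Classical in
noncomputable def cosetRep (S : AddSubgroup G) (x : G) : G :=
  if x ∈ S then 0 else (x : G ⧸ S).out

variable {S : AddSubgroup G}

theorem sub_cosetRep_mem (x : G) : x - cosetRep S x ∈ S := by
  unfold cosetRep
  split_ifs with hx
  · simpa using hx
  · exact QuotientAddGroup.eq_iff_sub_mem.1 (QuotientAddGroup.out_eq' (x : G ⧸ S)).symm

theorem cosetRep_of_mem {u : G} (hu : u ∈ S) : cosetRep S u = 0 := by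
  simp [cosetRep, hu]

theorem cosetRep_add_of_mem (x : G) {u : G} (hu : u ∈ S) : cosetRep S (x + u) = cosetRep S x := by
  have hmk : ((x + u : G) : G ⧸ S) = x := QuotientAddGroup.eq_iff_sub_mem.2 (by simpa using hu)
  unfold cosetRep
  rw [hmk]
  by_cases hx : x ∈ S <;> simp [hx, S.add_mem_cancel_right hu]

variable [TopologicalSpace G] [IsTopologicalAddGroup G]

theorem eventually_cosetRep_eq (hS : IsOpen (S : Set G)) (x : G) :
    ∀ᶠ y in 𝓝 x, cosetRep S y = cosetRep S x := by
  have : {y | y - x ∈ S} ∈ 𝓝 x :=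
    (hS.preimage (continuous_sub_right x)).mem_nhds (by simp)
  filter_upwards [this] with y hy
  simpa using cosetRep_add_of_mem x hy

theorem isLocallyConstant_cosetRep (hS : IsOpen (S : Set G)) : IsLocallyConstant (cosetRep S) :=
  (IsLocallyConstant.iff_eventually_eq _).2 (eventually_cosetRep_eq hS)

theorem isOpenMap_sub_cosetRep (hS : IsOpen (S : Set G)) :
    IsOpenMap fun x => x - cosetRep S x := by
  refine IsOpenMap.of_nhds_le fun x => le_of_eq ?_
  calc 𝓝 (x - cosetRep S x) = map (fun y => y - cosetRep S x) (𝓝 x) :=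
        ((Homeomorph.subRight (cosetRep S x)).map_nhds_eq x).symm
    _ = map (fun y => y - cosetRep S y) (𝓝 x) :=
        map_congr ((eventually_cosetRep_eq hS x).mono fun y hy => by simp only [hy])

end CosetRep

section Construction

variable {G H : Type*} [TopologicalSpace G] [AddCommGroup G] [IsTopologicalAddGroup G]
  [TopologicalSpace H] [AddCommGroup H] [IsTopologicalAddGroup H]

theorem exists_extend_of_isOpen_addSubgroup [MeasurableSpace H] [BorelSpace H]
    [SecondCountableTopology H] {S : AddSubgroup G} (hS : IsOpen (S : Set G)) {f : G → H}
    (hf : BaireMeasurable f) (hf0 : f 0 = 0) {N N' : AddSubgroup H}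
    (hSN : ∀ x ∈ S, ∀ u ∈ S, addDefect f x u ∈ N) (hN' : ∀ x, ∀ u ∈ S, addDefect f x u ∈ N') :
    ∃ g : G → H, BaireMeasurable g ∧ (∀ u ∈ S, g u = f u) ∧
      (∀ x, ∀ u ∈ S, addDefect g x u ∈ N) ∧ ∀ x, g x - f x ∈ N' := by
  set r := cosetRep S
  refine ⟨fun x => f (r x) + f (x - r x), Measurable.add
    ((isLocallyConstant_cosetRep hS).baireMeasurable_comp f)
    (hf.comp_isOpenMap (continuous_id.sub (isLocallyConstant_cosetRep hS).continuous)
      (isOpenMap_sub_cosetRep hS)), fun u hu => ?_, fun x u hu => ?_, fun x => ?_⟩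
  · simp [r, cosetRep_of_mem hu, hf0]
  · have : addDefect (fun x => f (r x) + f (x - r x)) x u = addDefect f (x - r x) u := by
      simp only [addDefect, r, cosetRep_add_of_mem x hu, cosetRep_of_mem hu, hf0, sub_zero,
        zero_add, sub_add_eq_add_sub]
      abel
    exact this ▸ hSN _ (sub_cosetRep_mem x) u hu
  · have : f (r x) + f (x - r x) - f x = -addDefect f (r x) (x - r x) := by
      simp only [addDefect, add_sub_cancel]
      abel
    exact this ▸ N'.neg_mem (hN' _ _ (sub_cosetRep_mem x))

theorem exists_isOpen_addSubgroup_forall_exists_sub_mem [BaireSpace G]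
    (hGna : ∀ U ∈ 𝓝 (0 : G), ∃ S : AddSubgroup G, IsOpen (S : Set G) ∧ (S : Set G) ⊆ U)
    {f : G → H} {D : Set G} (hD : D ∈ residual G) (hfD : ContinuousOn f D)
    {W : AddSubgroup G} (hW : IsOpen (W : Set G)) {N : AddSubgroup H}
    (hWN : ∀ x ∈ W, ∀ y ∈ W, addDefect f x y ∈ N) {U : Set H} (hU : U ∈ 𝓝 0) :
    ∃ S : AddSubgroup G, IsOpen (S : Set G) ∧ S ≤ W ∧ ∀ u ∈ S, ∃ m ∈ N, f u - m ∈ U := by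
  obtain ⟨Ω, hΩ, hΩU⟩ := exists_nhds_half_neg hU
  obtain ⟨z, hzW, hzD⟩ := (dense_of_mem_residual hD).inter_open_nonempty W hW ⟨0, W.zero_mem⟩
  have hnear : ∀ᶠ v in 𝓝 (0 : G), v ∈ W ∧ (z + v ∈ D → f (z + v) - f z ∈ Ω) := by
    have hcont : ∀ᶠ y in 𝓝[D] z, f y - f z ∈ Ω := tendsto_sub_nhds_zero_iff.2 (hfD z hzD) hΩ
    have htrans : Tendsto (fun v => z + v) (𝓝 0) (𝓝 z) := by
      simpa using (continuous_const_add z).tendsto 0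
    exact (show ∀ᶠ v in 𝓝 (0 : G), v ∈ W from hW.mem_nhds W.zero_mem).and
      (htrans.eventually (eventually_nhdsWithin_iff.1 hcont))
  obtain ⟨S, hS, hSsub⟩ := hGna _ hnear
  refine ⟨S, hS, fun v hv => (hSsub hv).1, fun u hu => ?_⟩
  have hD' : (fun w => w + u) ⁻¹' D ∈ residual G := by
    rw [← (Homeomorph.addRight u).residual_map_eq] at hD
    exact hD
  obtain ⟨w, hwS, hwD, hwuD⟩ := (dense_of_mem_residual (inter_mem hD hD')).inter_open_nonempty
    {w | w - z ∈ S} (hS.preimage (continuous_sub_right z)) ⟨z, by simp [S.zero_mem]⟩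
  have hw : w - z ∈ S := hwS
  have hwu : w - z + u ∈ S := S.add_mem hw hu
  have h1 : f w - f z ∈ Ω := by simpa using (hSsub hw).2 (by simpa using hwD)
  have h2 : f (w + u) - f z ∈ Ω := by
    have hzwu : z + (w - z + u) = w + u := by abel
    exact hzwu ▸ (hSsub hwu).2 (hzwu ▸ hwuD)
  refine ⟨-addDefect f w u, N.neg_mem (hWN w ?_ u (hSsub hu).1), ?_⟩
  · simpa using W.add_mem hzW (hSsub hw).1
  · have : f u - -addDefect f w u = (f (w + u) - f z) - (f w - f z) := by
      simp only [addDefect]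
      abel
    exact this ▸ hΩU _ h2 _ h1

end Construction

section Selection

variable {G H : Type*} [TopologicalSpace G] [AddCommGroup G] [AddCommGroup H]

theorem mem_of_eventually_addDefect_sub_mem [BaireSpace G] {N N' : AddSubgroup H} (hN' : N' ≤ N)
    {f : G → H} {C : Set G} (hC : IsOpen C) (hCne : C.Nonempty) {x : G}
    (hxN : ∀ β, addDefect f x β ∈ N) {h : H}
    (hx : ∀ᶠ β in residual G ⊓ 𝓟 C, addDefect f x β - h ∈ N') : h ∈ N := by
  have := residual_inf_principal_neBot hC hCne
  obtain ⟨β, hβ⟩ := hx.exists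
  simpa using N.sub_mem (hxN β) (hN' hβ)

theorem exists_eventually_addDefect_sub_mem [IsTopologicalAddGroup G] [BaireSpace G]
    [SecondCountableTopology G] {M M' : AddSubgroup H} {R : ℕ → H}
    (hR : ∀ h ∈ M, ∃ i, h - R i ∈ M') {f : G → H} (hfM : ∀ x y, addDefect f x y ∈ M)
    {W : AddSubgroup G} (hW : IsOpen (W : Set G)) {a : G × G} {i₀ : ℕ}
    (hbox : ∀ᶠ p in residual (G × G) ⊓ 𝓟 {p | p - a ∈ W.prod W},
      addDefect f p.1 p.2 - R i₀ ∈ M') {x : G} (hx : x ∈ W) :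
    ∃ i, ∀ᶠ β in residual G ⊓ 𝓟 {β | β - a.2 ∈ W}, addDefect f x β - R i ∈ M' := by
  have hbox' := (hbox.and (hbox.residual_inf_principal_coset_add (t := (x, 0))
    (AddSubgroup.mem_prod.2 ⟨hx, W.zero_mem⟩))).and
    (hbox.residual_inf_principal_coset_add (t := (0, x)) (AddSubgroup.mem_prod.2 ⟨W.zero_mem, hx⟩))
  obtain ⟨α, -, hα⟩ := Eventually.exists_mem_eventually_residual_inf_principal_prod
    (A := {α | α - a.1 ∈ W}) (B := {β | β - a.2 ∈ W}) (hW.preimage (continuous_sub_right _))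
    ⟨a.1, by simp⟩ hbox'
  obtain ⟨i, hi⟩ := hR _ (hfM α x)
  refine ⟨i, hα.mono fun β ⟨⟨h₀, h₁⟩, h₂⟩ => ?_⟩
  simp only [Prod.mk_add_mk, add_zero] at h₁ h₂
  have hxβ : addDefect f x β =
      addDefect f α x + addDefect f (α + x) β - addDefect f α (β + x) := by
    rw [add_comm β x]
    exact eq_sub_of_add_eq' (addDefect_add_addDefect f α x β).symm
  have : addDefect f x β - R i =
      (addDefect f α x - R i) + (addDefect f (α + x) β - R i₀) -
        (addDefect f α (β + x) - R i₀) := by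
    rw [hxβ]
    abel
  exact this ▸ M'.sub_mem (M'.add_mem hi h₁) h₂

theorem addDefect_add_mem_of_eventually [IsTopologicalAddGroup G] [BaireSpace G]
    {N : AddSubgroup H} {W : AddSubgroup G} (hW : IsOpen (W : Set G)) (b : G) {f e : G → H}
    (he : ∀ x ∈ W, ∀ᶠ β in residual G ⊓ 𝓟 {β | β - b ∈ W}, addDefect f x β - e x ∈ N)
    {x y : G} (hx : x ∈ W) (hy : y ∈ W) : addDefect (fun x => f x + e x) x y ∈ N := by
  have : (residual G ⊓ 𝓟 {β | β - b ∈ W}).NeBot :=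
    residual_inf_principal_neBot (hW.preimage (continuous_sub_right b)) ⟨b, by simp⟩
  obtain ⟨β, (hy' : _ - _ ∈ N), (hxy' : _ - _ ∈ N), (hx' : _ - _ ∈ N)⟩ :=
    ((he y hy).and ((he (x + y) (W.add_mem hx hy)).and
      ((he x hx).residual_inf_principal_coset_add hy))).exists
  have hxy : addDefect f x y =
      addDefect f x (β + y) + addDefect f y β - addDefect f (x + y) β := by
    rw [add_comm β y]
    exact eq_sub_of_add_eq (addDefect_add_addDefect f x y β)
  have : addDefect (fun x => f x + e x) x y = (addDefect f x (β + y) - e x) +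
      (addDefect f y β - e y) - (addDefect f (x + y) β - e (x + y)) := by
    rw [show addDefect (fun x => f x + e x) x y = addDefect f x y + (e (x + y) - e x - e y) by
      simp only [addDefect]; abel, hxy]
    abel
  exact this ▸ N.sub_mem (N.add_mem hx' hy') hxy'

variable [IsTopologicalAddGroup G] [TopologicalSpace H] [IsTopologicalAddGroup H]
  [MeasurableSpace H] [BorelSpace H] [SecondCountableTopology H]

theorem BaireMeasurable.uncurry_addDefect {f : G → H} (hf : BaireMeasurable f) :
    BaireMeasurable (Function.uncurry (addDefect f)) :=
  Measurable.sub (Measurable.sub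
    (hf.comp_isOpenMap continuous_add (isOpenMap_snd.comp (Homeomorph.shearAddRight G).isOpenMap))
    (hf.comp_isOpenMap continuous_fst isOpenMap_fst))
    (hf.comp_isOpenMap continuous_snd isOpenMap_snd)

theorem BaireMeasurable.baireMeasurableSet_addDefect_sub_mem {f : G → H}
    (hf : BaireMeasurable f) {N : AddSubgroup H} (hN : MeasurableSet (N : Set H)) (h : H) :
    BaireMeasurableSet {p : G × G | addDefect f p.1 p.2 - h ∈ N} :=
  hf.uncurry_addDefect.baireMeasurableSet_preimage (measurable_sub_const h hN)

variable [PolishSpace G]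

theorem exists_coset_eventually_addDefect_sub_mem
    (hGna : ∀ U ∈ 𝓝 (0 : G), ∃ S : AddSubgroup G, IsOpen (S : Set G) ∧ (S : Set G) ⊆ U)
    {M M' : AddSubgroup H} (hM' : MeasurableSet (M' : Set H)) {R : ℕ → H}
    (hR : ∀ h ∈ M, ∃ i, h - R i ∈ M') {f : G → H} (hf : BaireMeasurable f)
    (hfM : ∀ x y, addDefect f x y ∈ M) {V : AddSubgroup G} (hV : IsOpen (V : Set G)) :
    ∃ (W : AddSubgroup G) (a : G × G) (i : ℕ), IsOpen (W : Set G) ∧ W ≤ V ∧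
      ∀ᶠ p in residual (G × G) ⊓ 𝓟 {p | p - a ∈ W.prod W}, addDefect f p.1 p.2 - R i ∈ M' := by
  obtain ⟨i, O, -, hO, ⟨a, haO⟩, hOi⟩ := exists_isOpen_eventually_residual_inf_principal_mem
    (fun i => hf.baireMeasurableSet_addDefect_sub_mem hM' (R i)) isOpen_univ univ_nonempty
    fun p _ => mem_iUnion.2 (hR _ (hfM p.1 p.2))
  obtain ⟨u, hu, v, hv, huv⟩ := mem_nhds_prod_iff.1 (hO.mem_nhds haO)
  have hnhds : {w | a.1 + w ∈ u} ∩ {w | a.2 + w ∈ v} ∩ V ∈ 𝓝 (0 : G) := by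
    refine inter_mem (inter_mem ?_ ?_) (hV.mem_nhds V.zero_mem)
    · exact (continuous_const_add _).tendsto' 0 _ (add_zero _) hu
    · exact (continuous_const_add _).tendsto' 0 _ (add_zero _) hv
  obtain ⟨W, hW, hWsub⟩ := hGna _ hnhds
  refine ⟨W, a, i, hW, fun w hw => (hWsub hw).2, hOi.filter_mono (inf_le_inf_left _ ?_)⟩
  refine principal_mono.2 fun p hp => huv ⟨?_, ?_⟩
  · simpa using (hWsub hp.1).1.1
  · simpa using (hWsub hp.2).1.2

theorem exists_baireMeasurable_addDefect_mem
    (hGna : ∀ U ∈ 𝓝 (0 : G), ∃ S : AddSubgroup G, IsOpen (S : Set G) ∧ (S : Set G) ⊆ U)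
    {M Mbig M' : AddSubgroup H} (hM' : MeasurableSet (M' : Set H)) (hM'Mbig : M' ≤ Mbig)
    {R : ℕ → H} (hR0 : R 0 = 0) (hR : ∀ h ∈ M, ∃ i, h - R i ∈ M') {f : G → H}
    (hf : BaireMeasurable f) (hf0 : f 0 = 0) (hfM : ∀ x y, addDefect f x y ∈ M)
    {V : AddSubgroup G} (hV : IsOpen (V : Set G)) (hfV : ∀ x, ∀ u ∈ V, addDefect f x u ∈ Mbig) :
    ∃ W : AddSubgroup G, IsOpen (W : Set G) ∧ W ≤ V ∧ ∃ f₁ : G → H, BaireMeasurable f₁ ∧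
      f₁ 0 = 0 ∧ (∀ x, f₁ x - f x ∈ Mbig) ∧ ∀ x ∈ W, ∀ y ∈ W, addDefect f₁ x y ∈ M' := by
  classical
  obtain ⟨W, a, i₀, hW, hWV, hbox⟩ :=
    exists_coset_eventually_addDefect_sub_mem hGna hM' hR hf hfM hV
  set C : Set G := {β | β - a.2 ∈ W}
  have hC : IsOpen C := hW.preimage (continuous_sub_right _)
  have hCne : C.Nonempty := ⟨a.2, by simp [C]⟩
  -- the premise `x ∈ W` makes every `P x` satisfiable, so `Nat.find` applies at every `x`
  let P : G → ℕ → Prop := fun x i =>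
    x ∈ W → ∀ᶠ β in residual G ⊓ 𝓟 C, addDefect f x β - R i ∈ M'
  have hP : ∀ x, ∃ i, P x i := fun x => by
    by_cases hx : x ∈ W
    · obtain ⟨i, hi⟩ := exists_eventually_addDefect_sub_mem hR hfM hW hbox hx
      exact ⟨i, fun _ => hi⟩
    · exact ⟨0, fun h => absurd h hx⟩
  have hPmeas : ∀ i, BaireMeasurableSet {x | P x i} := fun i => by
    have : {x | P x i} = (W : Set G)ᶜ ∪
        {x | ∀ᶠ β in residual G ⊓ 𝓟 C, (x, β) ∈ {p : G × G | addDefect f p.1 p.2 - R i ∈ M'}} :=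
      ext fun x => imp_iff_not_or
    rw [this]
    exact hW.baireMeasurableSet.compl.union
      ((hf.baireMeasurableSet_addDefect_sub_mem hM' (R i)).setOf_eventually_residual_inf_principal
        hC)
  let n : G → ℕ := fun x => Nat.find (hP x)
  have hn : BaireMeasurable n := @measurable_find _ (eventuallyMeasurableSpace _ _) _ _ hP hPmeas
  have hn0 : n 0 = 0 := (Nat.find_eq_zero _).2 fun _ =>
    Eventually.of_forall fun β => by simp [addDefect_zero_left, hf0, hR0]
  have hRn : ∀ x, R (n x) ∈ Mbig := fun x => by
    by_cases hx : x ∈ W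
    · exact mem_of_eventually_addDefect_sub_mem hM'Mbig hC hCne
        (fun β => addDefect_comm f x β ▸ hfV β x (hWV hx)) (Nat.find_spec (hP x) hx)
    · rw [show n x = 0 from (Nat.find_eq_zero _).2 fun h => absurd h hx, hR0]
      exact Mbig.zero_mem
  exact ⟨W, hW, hWV, fun x => f x + R (n x), Measurable.add hf (measurable_from_nat.comp hn),
    by simp [hf0, hn0, hR0], fun x => by simpa using hRn x, fun x hx y hy =>
      addDefect_add_mem_of_eventually hW a.2 (fun x hx => Nat.find_spec (hP x) hx) hx hy⟩

end Selection

section ApproxHom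

variable {G H : Type*} [AddCommGroup G] [AddCommGroup H]

structure IsApproxHom (M N : AddSubgroup H) (U : Set H) (V : AddSubgroup G) (f : G → H) :
    Prop where
  addDefect_mem : ∀ x y, addDefect f x y ∈ M
  addDefect_mem_of_mem : ∀ x, ∀ u ∈ V, addDefect f x u ∈ N
  exists_sub_mem : ∀ u ∈ V, ∃ m ∈ N, f u - m ∈ U

variable {M N : AddSubgroup H} {U U' : Set H} {V : AddSubgroup G} {f g : G → H}

theorem IsApproxHom.of_sub_mem (hf : IsApproxHom M N U V f) (hNM : N ≤ M)
    (hgf : ∀ x, g x - f x ∈ N) : IsApproxHom M N U V g where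
  addDefect_mem x y := by
    simpa using M.add_mem (hf.addDefect_mem x y) (hNM (addDefect_sub_addDefect_mem hgf x y))
  addDefect_mem_of_mem x u hu := by
    simpa using N.add_mem (hf.addDefect_mem_of_mem x u hu) (addDefect_sub_addDefect_mem hgf x u)
  exists_sub_mem u hu := by
    obtain ⟨m, hm, hmU⟩ := hf.exists_sub_mem u hu
    refine ⟨m + (g u - f u), N.add_mem hm (hgf u), ?_⟩
    rwa [show g u - (m + (g u - f u)) = f u - m by abel]

theorem IsApproxHom.mono (hf : IsApproxHom M N U V f) {S : AddSubgroup G} (hSV : S ≤ V) :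
    IsApproxHom M N U S f :=
  ⟨hf.addDefect_mem, fun x u hu => hf.addDefect_mem_of_mem x u (hSV hu),
    fun u hu => hf.exists_sub_mem u (hSV hu)⟩

theorem IsApproxHom.add_sub_mem (hf : IsApproxHom M N U V f) (hNU : (N : Set H) ⊆ U)
    (hUU' : ∀ a ∈ U, ∀ b ∈ U, a + b ∈ U') (x : G) {v : G} (hv : v ∈ V) :
    f (x + v) - f x ∈ U' := by
  obtain ⟨m, hm, hmU⟩ := hf.exists_sub_mem v hv
  have : f (x + v) - f x = (addDefect f x v + m) + (f v - m) := by simp only [addDefect]; abel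
  exact this ▸ hUU' _ (hNU (N.add_mem (hf.addDefect_mem_of_mem x v hv) hm)) _ hmU

theorem IsApproxHom.mem (hf : IsApproxHom M N U V f) (hNU : (N : Set H) ⊆ U)
    (hUU' : ∀ a ∈ U, ∀ b ∈ U, a + b ∈ U') {v : G} (hv : v ∈ V) : f v ∈ U' := by
  obtain ⟨m, hm, hmU⟩ := hf.exists_sub_mem v hv
  simpa using hUU' _ (hNU hm) _ hmU

theorem isApproxHom_sub_apply_zero {F : G → H} (hF : ∀ x y, addDefect F x y ∈ M) :
    IsApproxHom M M univ ⊤ fun x => F x - F 0 := by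
  have hF0 : F 0 ∈ M := by simpa [addDefect] using M.neg_mem (hF 0 0)
  have hdef : ∀ x y, addDefect (fun x => F x - F 0) x y = addDefect F x y + F 0 := fun x y => by
    simp only [addDefect]; abel
  exact ⟨fun x y => hdef x y ▸ M.add_mem (hF x y) hF0,
    fun x y _ => hdef x y ▸ M.add_mem (hF x y) hF0, fun _ _ => ⟨0, M.zero_mem, mem_univ _⟩⟩

end ApproxHom

theorem exists_seq_of_forall_exists {α : Type*} {P : ℕ → α → Prop} {r : ℕ → α → α → Prop}
    {a₀ : α} (h₀ : P 0 a₀) (h : ∀ k a, P k a → ∃ b, P (k + 1) b ∧ r k a b) :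
    ∃ s : ℕ → α, s 0 = a₀ ∧ ∀ k, P k (s k) ∧ r k (s k) (s (k + 1)) := by
  classical
  choose! next hnext using h
  let s : ℕ → α := fun k => Nat.rec a₀ next k
  have hs : ∀ k, P k (s k) := fun k => by
    induction k with
    | zero => exact h₀
    | succ k ih => exact (hnext k _ ih).1
  exact ⟨s, rfl, fun k => ⟨hs k, (hnext k _ (hs k)).2⟩⟩

section Iteration

variable {G H : Type*} [TopologicalSpace G] [AddCommGroup G] [IsTopologicalAddGroup G]
  [PolishSpace G] [TopologicalSpace H] [AddCommGroup H] [IsTopologicalAddGroup H]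
  [MeasurableSpace H] [BorelSpace H] [SecondCountableTopology H]

theorem IsApproxHom.exists_refine
    (hGna : ∀ U ∈ 𝓝 (0 : G), ∃ S : AddSubgroup G, IsOpen (S : Set G) ∧ (S : Set G) ⊆ U)
    {M Mbig M' : AddSubgroup H} (hM' : MeasurableSet (M' : Set H)) (hM'Mbig : M' ≤ Mbig)
    (hMbigM : Mbig ≤ M) {R : ℕ → H} (hR0 : R 0 = 0) (hR : ∀ h ∈ M, ∃ i, h - R i ∈ M')
    {U₀ U : Set H} (hU : U ∈ 𝓝 0) {V : AddSubgroup G} (hV : IsOpen (V : Set G)) {f : G → H}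
    (hf : BaireMeasurable f) (hf0 : f 0 = 0) (happrox : IsApproxHom M Mbig U₀ V f) :
    ∃ S : AddSubgroup G, IsOpen (S : Set G) ∧ S ≤ V ∧ ∃ g : G → H, BaireMeasurable g ∧
      g 0 = 0 ∧ IsApproxHom M M' U S g ∧ ∀ x, g x - f x ∈ Mbig := by
  obtain ⟨W, hW, hWV, f₁, hf₁, hf₁0, hf₁f, hf₁W⟩ := exists_baireMeasurable_addDefect_mem hGna
    hM' hM'Mbig hR0 hR hf hf0 happrox.addDefect_mem hV happrox.addDefect_mem_of_mem
  have hf₁V := (happrox.of_sub_mem hMbigM hf₁f).addDefect_mem_of_mem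
  obtain ⟨D, hD, hf₁D⟩ := hf₁.exists_mem_residual_continuousOn
  obtain ⟨S, hS, hSW, hf₁S⟩ :=
    exists_isOpen_addSubgroup_forall_exists_sub_mem hGna hD hf₁D hW hf₁W hU
  obtain ⟨g, hg, hgS, hgS', hgf₁⟩ := exists_extend_of_isOpen_addSubgroup hS hf₁ hf₁0
    (fun x hx u hu => hf₁W x (hSW hx) u (hSW hu)) fun x u hu => hf₁V x u (hWV (hSW hu))
  have hgf : ∀ x, g x - f x ∈ Mbig := fun x => by
    simpa using Mbig.add_mem (hgf₁ x) (hf₁f x)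
  refine ⟨S, hS, hSW.trans hWV, g, hg, (hgS 0 S.zero_mem).trans hf₁0,
    ⟨(happrox.of_sub_mem hMbigM hgf).addDefect_mem, hgS', fun u hu => ?_⟩, hgf⟩
  simpa [hgS u hu] using hf₁S u hu

theorem exists_seq_isApproxHom
    (hGna : ∀ U ∈ 𝓝 (0 : G), ∃ S : AddSubgroup G, IsOpen (S : Set G) ∧ (S : Set G) ⊆ U)
    {M : AddSubgroup H} {N : ℕ → AddSubgroup H} (hNM : ∀ k, N k ≤ M)
    (hN : ∀ k, N (k + 1) ≤ N k) (hNmeas : ∀ k, MeasurableSet (N k : Set H)) {R : ℕ → ℕ → H}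
    (hR0 : ∀ k, R k 0 = 0) (hR : ∀ k, ∀ h ∈ M, ∃ i, h - R k i ∈ N (k + 1)) {U : ℕ → Set H}
    (hU : ∀ k, U k ∈ 𝓝 0) {f₀ : G → H} (hf₀ : BaireMeasurable f₀) (hf₀0 : f₀ 0 = 0)
    (h₀ : IsApproxHom M (N 0) (U 0) ⊤ f₀) :
    ∃ (V : ℕ → AddSubgroup G) (f : ℕ → G → H), V 0 = ⊤ ∧ f 0 = f₀ ∧
      (∀ k, IsOpen (V k : Set G)) ∧ Antitone V ∧ (∀ Ω ∈ 𝓝 (0 : G), ∃ k, (V k : Set G) ⊆ Ω) ∧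
      (∀ k, IsApproxHom M (N k) (U k) (V k) (f k)) ∧ ∀ k x, f (k + 1) x - f k x ∈ N k := by
  obtain ⟨Ω, hΩ⟩ := (𝓝 (0 : G)).exists_antitone_basis
  obtain ⟨s, hs0, hs⟩ := exists_seq_of_forall_exists
    (P := fun k (p : AddSubgroup G × (G → H)) => IsOpen (p.1 : Set G) ∧ BaireMeasurable p.2 ∧
      p.2 0 = 0 ∧ IsApproxHom M (N k) (U k) p.1 p.2)
    (r := fun k p q => q.1 ≤ p.1 ∧ (q.1 : Set G) ⊆ Ω (k + 1) ∧ ∀ x, q.2 x - p.2 x ∈ N k)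
    (a₀ := (⊤, f₀)) ⟨isOpen_univ, hf₀, hf₀0, h₀⟩ fun k p ⟨hV, hf, hf0, happrox⟩ => by
      obtain ⟨S, hS, hSV, g, hg, hg0, hgapprox, hgf⟩ := happrox.exists_refine hGna (hNmeas (k + 1))
        (hN k) (hNM k) (hR0 k) (hR k) (hU (k + 1)) hV hf hf0
      obtain ⟨T, hT, hTΩ⟩ := hGna _ (hΩ.mem (k + 1))
      exact ⟨(S ⊓ T, g), ⟨hS.inter hT, hg, hg0, hgapprox.mono inf_le_left⟩,
        inf_le_left.trans hSV, fun x hx => hTΩ hx.2, hgf⟩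
  refine ⟨fun k => (s k).1, fun k => (s k).2, by simp [hs0], by simp [hs0], fun k => (hs k).1.1,
    antitone_nat_of_succ_le fun k => (hs k).2.1, fun Ω' hΩ' => ?_, fun k => (hs k).1.2.2.2,
    fun k => (hs k).2.2.2⟩
  obtain ⟨k, hk⟩ := hΩ.mem_iff.1 hΩ'
  exact ⟨k + 1, ((hs k).2.2.1).trans ((hΩ.antitone k.le_succ).trans hk)⟩

end Iteration

theorem exists_strictMono_zero_forall {P : ℕ → ℕ → Prop} (h0 : P 0 0)
    (h : ∀ n, ∀ᶠ k in atTop, P n k) : ∃ j : ℕ → ℕ, StrictMono j ∧ j 0 = 0 ∧ ∀ n, P n (j n) := by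
  obtain ⟨φ, hφ, hφP⟩ := extraction_forall_of_eventually
    (P := fun n k => 0 < k ∧ P (n + 1) k) fun n => (eventually_gt_atTop 0).and (h (n + 1))
  refine ⟨fun | 0 => 0 | n + 1 => φ n, strictMono_nat_of_lt_succ fun n => ?_, rfl,
    fun | 0 => h0 | n + 1 => (hφP n).2⟩
  cases n with
  | zero => exact (hφP 0).1
  | succ n => exact hφ n.lt_succ_self

theorem eventually_forall_add_mem {H : Type*} [TopologicalSpace H] [AddGroup H] [ContinuousAdd H]
    {Hk : ℕ → Set H} (hanti : Antitone Hk) (hbasis : ∀ U ∈ 𝓝 (0 : H), ∃ k, Hk k ⊆ U)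
    {U : Set H} (hU : U ∈ 𝓝 0) : ∀ᶠ k in atTop, ∀ a ∈ Hk k, ∀ b ∈ Hk k, a + b ∈ U := by
  obtain ⟨V, hV, hVU⟩ := exists_nhds_zero_half hU
  obtain ⟨k₀, hk₀⟩ := hbasis V hV
  filter_upwards [eventually_ge_atTop k₀] with k hk a ha b hb
  exact hVU a (hk₀ (hanti hk ha)) b (hk₀ (hanti hk hb))

theorem continuous_of_forall_add_sub_mem {G H : Type*} [TopologicalSpace G] [AddCommGroup G]
    [IsTopologicalAddGroup G] [TopologicalSpace H] [AddGroup H] [IsTopologicalAddGroup H]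
    {g : G → H} {Gk : ℕ → Set G} (hGk : ∀ n, Gk n ∈ 𝓝 0) {Hk : ℕ → Set H}
    (hHk : ∀ U ∈ 𝓝 (0 : H), ∃ n, Hk n ⊆ U) (h : ∀ n x, ∀ v ∈ Gk n, g (x + v) - g x ∈ Hk n) :
    Continuous g := by
  refine continuous_iff_continuousAt.2 fun x => tendsto_sub_nhds_zero_iff.1 fun U hU => ?_
  obtain ⟨n, hn⟩ := hHk U hU
  refine mem_map.2 ?_
  filter_upwards [mem_map.1 ((continuous_sub_right x).tendsto' x 0 (sub_self x) (hGk n))]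
    with y hy
  simpa using hn (h n x (y - x) hy)

theorem exists_seq_zero_forall_sub_mem {K : Type*} [TopologicalSpace K] [AddGroup K]
    [IsTopologicalAddGroup K] [SeparableSpace K] {N : AddSubgroup K} (hN : IsOpen (N : Set K)) :
    ∃ R : ℕ → K, R 0 = 0 ∧ ∀ x, ∃ i, x - R i ∈ N := by
  obtain ⟨D, hDc, hDd⟩ := exists_countable_dense K
  obtain ⟨d, rfl⟩ := hDc.exists_eq_range hDd.nonempty
  refine ⟨fun | 0 => 0 | i + 1 => d i, rfl, fun x => ?_⟩
  obtain ⟨-, hy, i, rfl⟩ := hDd.inter_open_nonempty {y | x - y ∈ N}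
    (hN.preimage (continuous_sub_left x)) ⟨x, by simp⟩
  exact ⟨i + 1, hy⟩

section Polishable

variable {H : Type*} [AddCommGroup H] {M : AddSubgroup H}

theorem exists_seq_zero_forall_sub_mem_of_polishable (τ : TopologicalSpace M)
    (hPol : @PolishSpace M τ) (hTG : @IsTopologicalAddGroup M τ _) {N : AddSubgroup H}
    (hN : {m : M | (m : H) ∈ N} ∈ @nhds M τ 0) :
    ∃ R : ℕ → H, R 0 = 0 ∧ ∀ h ∈ M, ∃ i, h - R i ∈ N := by
  let := τ
  obtain ⟨R, hR0, hR⟩ := exists_seq_zero_forall_sub_mem ((N.addSubgroupOf M).isOpen_of_mem_nhds hN)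
  exact ⟨fun i => R i, by simp [hR0], fun h hh => hR ⟨h, hh⟩⟩

theorem exists_forall_sub_mem_of_polishable (τ : TopologicalSpace M) (hPol : @PolishSpace M τ)
    (hTG : @IsTopologicalAddGroup M τ _) {N : ℕ → AddSubgroup H} (hNM : ∀ k, N k ≤ M)
    (hN : ∀ k, N (k + 1) ≤ N k) (hNnhds : ∀ k, {m : M | (m : H) ∈ N k} ∈ @nhds M τ 0)
    (hNbasis : ∀ U ∈ @nhds M τ 0, ∃ k, {m : M | (m : H) ∈ N k} ⊆ U) {X : Type*}
    {f : ℕ → X → H} (hf : ∀ k x, f (k + 1) x - f k x ∈ N k) :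
    ∃ g : X → H, ∀ k x, g x - f k x ∈ N k := by
  let := τ
  have htel : ∀ x m n, m ≤ n → f n x - f m x ∈ N m := fun x m n hmn => by
    induction n, hmn using Nat.le_induction with
    | base => simp
    | succ n hmn ih =>
      simpa using (N m).add_mem (antitone_nat_of_succ_le hN hmn (hf n x)) ih
  choose y hy using fun x => exists_forall_sub_mem_of_forall_sub_mem
    (fun k => (N k).addSubgroupOf M) (fun k => AddSubgroup.isOpen_of_mem_nhds _ (hNnhds k))
    hNbasis (fun n => ⟨f n x - f 0 x, hNM 0 (htel x 0 n n.zero_le)⟩)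
    fun m n hmn => by simpa [AddSubgroup.mem_addSubgroupOf] using htel x m n hmn
  refine ⟨fun x => f 0 x + y x, fun k x => ?_⟩
  simpa [AddSubgroup.mem_addSubgroupOf, sub_sub_eq_add_sub, add_comm] using hy x k

end Polishable

theorem exists_addSubgroups_of_isApproxHom {G H : Type*} [TopologicalSpace G] [AddCommGroup G]
    [IsTopologicalAddGroup G] [TopologicalSpace H] [AddCommGroup H] [IsTopologicalAddGroup H]
    {M : AddSubgroup H} {Mk : ℕ → AddSubgroup H} (hMkdec : ∀ k, Mk (k + 1) ≤ Mk k)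
    {Hk : ℕ → Set H} (hHk0 : Hk 0 = univ) (hHkdec : ∀ k, Hk (k + 1) ⊆ Hk k)
    (hHknhds : ∀ k, Hk k ∈ 𝓝 0) (hHkbasis : ∀ U ∈ 𝓝 (0 : H), ∃ k, Hk k ⊆ U)
    (hMkHk : ∀ k, (Mk k : Set H) ⊆ Hk k) {V : ℕ → AddSubgroup G} (hV0 : V 0 = ⊤)
    (hV : ∀ k, IsOpen (V k : Set G)) (hVanti : Antitone V)
    (hVbasis : ∀ U ∈ 𝓝 (0 : G), ∃ k, (V k : Set G) ⊆ U) {g : G → H}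
    (hg : ∀ k, IsApproxHom M (Mk k) (Hk k) (V k) g) :
    ∃ Gk : ℕ → AddSubgroup G, Gk 0 = ⊤ ∧ (∀ k, Gk (k + 1) ≤ Gk k) ∧
      (∀ k, (Gk k : Set G) ∈ 𝓝 0) ∧ (∀ U ∈ 𝓝 (0 : G), ∃ k, (Gk k : Set G) ⊆ U) ∧
      Continuous g ∧ (∀ k, ∀ x ∈ Gk k, ∀ y ∈ Gk k, addDefect g x y ∈ Mk k) ∧
      ∀ k, ∀ x ∈ Gk k, g x ∈ Hk k := by
  obtain ⟨j, hj, hj0, hjadd⟩ := exists_strictMono_zero_forall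
    (P := fun n k => ∀ a ∈ Hk k, ∀ b ∈ Hk k, a + b ∈ Hk n) (by simp [hHk0])
    fun n => eventually_forall_add_mem (antitone_nat_of_succ_le hHkdec) hHkbasis (hHknhds n)
  refine ⟨fun n => V (j n), by simp [hj0, hV0], fun n => hVanti (hj.monotone n.le_succ),
    fun n => (hV _).mem_nhds (V _).zero_mem, fun U hU => ?_,
    continuous_of_forall_add_sub_mem (fun n => (hV _).mem_nhds (V _).zero_mem) hHkbasis
      fun n x v hv => (hg (j n)).add_sub_mem (hMkHk _) (hjadd n) x hv,
    fun n x _ y hy => antitone_nat_of_succ_le hMkdec (hj.id_le n)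
      ((hg (j n)).addDefect_mem_of_mem x y hy),
    fun n x hx => (hg (j n)).mem (hMkHk _) (hjadd n) hx⟩
  obtain ⟨k, hk⟩ := hVbasis U hU
  exact ⟨k, fun x hx => hk (hVanti (hj.id_le k) hx)⟩

theorem statement8_general
    {G H : Type*}
    [TopologicalSpace G] [AddCommGroup G] [IsTopologicalAddGroup G] [PolishSpace G]
    [MeasurableSpace G] [BorelSpace G]
    -- `G` is non-Archimedean:
    (hGna : ∀ U ∈ nhds (0 : G), ∃ S : AddSubgroup G, IsOpen (S : Set G) ∧ (S : Set G) ⊆ U)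
    [TopologicalSpace H] [AddCommGroup H] [IsTopologicalAddGroup H] [PolishSpace H]
    [MeasurableSpace H] [BorelSpace H]
    -- `M` is a non-Archimedean Polishable subgroup of `H`, with Polish group topology `τ`:
    (M : AddSubgroup H) (τ : TopologicalSpace M)
    (hPol : @PolishSpace M τ) (hTG : @IsTopologicalAddGroup M τ _)
    (hBorel : ∀ U : Set M, τ.IsOpen U → MeasurableSet (Subtype.val '' U))
    -- `F` is a Borel lift of a homomorphism `G → H/M`:
    (F : G → H) (hF : Measurable F)
    (hcoc : ∀ x y : G, F (x + y) - F x - F y ∈ M)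
    -- `(Hk)` is a decreasing neighborhood basis of `0` in `H` with `Hk 0 = H`:
    (Hk : ℕ → Set H) (hHk0 : Hk 0 = Set.univ)
    (hHkdec : ∀ k, Hk (k + 1) ⊆ Hk k)
    (hHknhds : ∀ k, Hk k ∈ nhds (0 : H))
    (hHkbasis : ∀ U ∈ nhds (0 : H), ∃ k, Hk k ⊆ U)
    -- `(Mk)` is a decreasing neighborhood basis of `0` in `M` consisting of subgroups, with
    -- `Mk 0 = M` and `Mk k = cl_H(Mk k) ∩ M ⊆ Hk k`:
    (Mk : ℕ → AddSubgroup H) (hMk0 : Mk 0 = M) (hMkle : ∀ k, Mk k ≤ M)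
    (hMkdec : ∀ k, Mk (k + 1) ≤ Mk k)
    (hMknhds : ∀ k, {m : M | (m : H) ∈ Mk k} ∈ @nhds M τ 0)
    (hMkbasis : ∀ U ∈ @nhds M τ 0, ∃ k, {m : M | (m : H) ∈ Mk k} ⊆ U)
    (hMkcl : ∀ k, (Mk k : Set H) = closure (Mk k : Set H) ∩ (M : Set H))
    (hMkHk : ∀ k, (Mk k : Set H) ⊆ Hk k) :
    ∃ (Gk : ℕ → AddSubgroup G) (g : G → H),
      Gk 0 = ⊤ ∧
      (∀ k, Gk (k + 1) ≤ Gk k) ∧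
      (∀ k, (Gk k : Set G) ∈ nhds (0 : G)) ∧
      (∀ U ∈ nhds (0 : G), ∃ k, (Gk k : Set G) ⊆ U) ∧
      Continuous g ∧
      (∀ x : G, g x - F x ∈ M) ∧
      (∀ k, ∀ x ∈ Gk k, ∀ y ∈ Gk k, g (x + y) - g x - g y ∈ Mk k) ∧
      (∀ k, ∀ x ∈ Gk k, g x ∈ Hk k) := by
  have hMmeas : MeasurableSet (M : Set H) := by simpa using hBorel univ τ.isOpen_univ
  have hMkmeas : ∀ k, MeasurableSet (Mk k : Set H) := fun k =>
    hMkcl k ▸ isClosed_closure.measurableSet.inter hMmeas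
  choose R hR0 hR using fun k =>
    exists_seq_zero_forall_sub_mem_of_polishable τ hPol hTG (hMknhds (k + 1))
  obtain ⟨V, f, hV0, hf0, hV, hVanti, hVbasis, hf, hfsucc⟩ := exists_seq_isApproxHom hGna hMkle
    hMkdec hMkmeas hR0 hR hHknhds (hF.sub_const _).baireMeasurable (sub_self _)
    (by rw [hMk0, hHk0]; exact isApproxHom_sub_apply_zero hcoc)
  obtain ⟨g, hg⟩ := exists_forall_sub_mem_of_polishable τ hPol hTG hMkle hMkdec hMknhds
    hMkbasis hfsucc
  obtain ⟨Gk, hGk0, hGkdec, hGknhds, hGkbasis, hgc, hgdef, hgval⟩ :=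
    exists_addSubgroups_of_isApproxHom hMkdec hHk0 hHkdec hHknhds hHkbasis hMkHk hV0 hV hVanti
      hVbasis fun k => (hf k).of_sub_mem (hMkle k) (hg k)
  refine ⟨Gk, g, hGk0, hGkdec, hGknhds, hGkbasis, hgc, fun x => ?_, hgdef, hgval⟩
  have hF0 : F 0 ∈ M := by simpa using M.neg_mem (hcoc 0 0)
  have := M.sub_mem (hMk0 ▸ hg 0 x) hF0
  rw [hf0] at this
  simpa only [sub_sub, sub_add_cancel] using this

/-- Every Borel lift of a homomorphism from a non-Archimedean abelian Polish group `G` into a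
quotient `Ĥ/M` by a non-Archimedean Polishable subgroup with a suitable basis of subgroups can be
replaced by a continuous lift which is an "asymptotic homomorphism" (Lemma 7.2 of the paper). -/
theorem statement8
    {G H : Type*}
    [TopologicalSpace G] [AddCommGroup G] [IsTopologicalAddGroup G] [PolishSpace G]
    [MeasurableSpace G] [BorelSpace G]
    -- `G` is non-Archimedean:
    (hGna : ∀ U ∈ nhds (0 : G), ∃ S : AddSubgroup G, IsOpen (S : Set G) ∧ (S : Set G) ⊆ U)
    [TopologicalSpace H] [AddCommGroup H] [IsTopologicalAddGroup H] [PolishSpace H]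
    [MeasurableSpace H] [BorelSpace H]
    -- `M` is a non-Archimedean Polishable subgroup of `H`, with Polish group topology `τ`:
    (M : AddSubgroup H) (τ : TopologicalSpace M)
    (hPol : @PolishSpace M τ) (hTG : @IsTopologicalAddGroup M τ _)
    (hBorel : ∀ U : Set M, τ.IsOpen U → MeasurableSet (Subtype.val '' U))
    (hna : ∀ U ∈ @nhds M τ 0, ∃ S : AddSubgroup M, τ.IsOpen (S : Set M) ∧ (S : Set M) ⊆ U)
    -- `F` is a Borel lift of a homomorphism `G → H/M`:
    (F : G → H) (hF : Measurable F)
    (hcoc : ∀ x y : G, F (x + y) - F x - F y ∈ M)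
    -- `(Hk)` is a decreasing neighborhood basis of `0` in `H` with `Hk 0 = H`:
    (Hk : ℕ → Set H) (hHk0 : Hk 0 = Set.univ)
    (hHkdec : ∀ k, Hk (k + 1) ⊆ Hk k)
    (hHknhds : ∀ k, Hk k ∈ nhds (0 : H))
    (hHkbasis : ∀ U ∈ nhds (0 : H), ∃ k, Hk k ⊆ U)
    -- `(Mk)` is a decreasing neighborhood basis of `0` in `M` consisting of subgroups, with
    -- `Mk 0 = M` and `Mk k = cl_H(Mk k) ∩ M ⊆ Hk k`:
    (Mk : ℕ → AddSubgroup H) (hMk0 : Mk 0 = M) (hMkle : ∀ k, Mk k ≤ M)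
    (hMkdec : ∀ k, Mk (k + 1) ≤ Mk k)
    (hMknhds : ∀ k, {m : M | (m : H) ∈ Mk k} ∈ @nhds M τ 0)
    (hMkbasis : ∀ U ∈ @nhds M τ 0, ∃ k, {m : M | (m : H) ∈ Mk k} ⊆ U)
    (hMkcl : ∀ k, (Mk k : Set H) = closure (Mk k : Set H) ∩ (M : Set H))
    (hMkHk : ∀ k, (Mk k : Set H) ⊆ Hk k) :
    ∃ (Gk : ℕ → AddSubgroup G) (g : G → H),
      Gk 0 = ⊤ ∧
      (∀ k, Gk (k + 1) ≤ Gk k) ∧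
      (∀ k, (Gk k : Set G) ∈ nhds (0 : G)) ∧
      (∀ U ∈ nhds (0 : G), ∃ k, (Gk k : Set G) ⊆ U) ∧
      Continuous g ∧
      (∀ x : G, g x - F x ∈ M) ∧
      (∀ k, ∀ x ∈ Gk k, ∀ y ∈ Gk k, g (x + y) - g x - g y ∈ Mk k) ∧
      (∀ k, ∀ x ∈ Gk k, g x ∈ Hk k) :=
  statement8_general hGna M τ hPol hTG hBorel F hF hcoc Hk hHk0 hHkdec hHknhds hHkbasis Mk hMk0
    hMkle hMkdec hMknhds hMkbasis hMkcl hMkHk
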